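/- arXiv:1306.0120 — 2 statements merged into one kernel-verified Lean document; each statement's English description precedes it below -/
import Mathlib

section
/- Let F : ℝ × ℝⁿ → ℝⁿ be continuous, and suppose that for every compact interval I ⊆ ℝ, the restriction of F to I × ℝⁿ is Lipschitz in the second variable, uniformly in the first. Then for every initial condition (t₀, x₀, x₁) ∈ ℝ × ℝⁿ × ℝⁿ, the second-order ODE x''(t) = F(t, x(t)) with x(t₀) = x₀, x'(t₀) = x₁ has a (unique) solution defined on all of ℝ. -/
/-!
Writing `v = x'`, the equation becomes the first-order system `(x, v)' = (v, F(t, x))`, whose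
vector field is Lipschitz in `(x, v)` on `[a, b] × E²` for every compact `[a, b]`. If `K` is a
Lipschitz constant on `[a, b]`, Picard–Lindelöf gives a solution on any interval of length at most
`1 / (2K)` on either side of the initial time, whatever the initial value, since the field grows at
most linearly. Finitely many such pieces, glued end to end, solve the system on all of `[a, b]`;
by uniqueness, the solutions on `[t₀ - r, t₀ + r]` agree where they overlap and so patch together
to a solution on `ℝ`.
-/

open Set Metric NNReal

section FirstOrder

variable {E : Type*} [NormedAddCommGroup E] [NormedSpace ℝ E] {G : ℝ → E → E}

theorem hasDerivWithinAt_union_of_eqOn {w y z : ℝ → E} {s₁ s₂ : Set ℝ}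
    (hs₁ : IsClosed s₁) (hs₂ : IsClosed s₂)
    (hy : ∀ t ∈ s₁, HasDerivWithinAt y (G t (y t)) s₁ t)
    (hz : ∀ t ∈ s₂, HasDerivWithinAt z (G t (z t)) s₂ t)
    (hwy : EqOn w y s₁) (hwz : EqOn w z s₂) :
    ∀ t ∈ s₁ ∪ s₂, HasDerivWithinAt w (G t (w t)) (s₁ ∪ s₂) t := by
  have hpiece : ∀ {s : Set ℝ} {u : ℝ → E}, IsClosed s →
      (∀ t ∈ s, HasDerivWithinAt u (G t (u t)) s t) → EqOn w u s →
      ∀ t, HasDerivWithinAt w (G t (w t)) s t := by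
    intro s u hs hu hwu t
    by_cases ht : t ∈ s
    · rw [hwu ht]
      exact (hu t ht).congr hwu (hwu ht)
    · rw [hasDerivWithinAt_iff_hasFDerivWithinAt]
      exact .of_notMem_closure (by rwa [hs.closure_eq])
  exact fun t _ => (hpiece hs₁ hy hwy t).union (hpiece hs₂ hz hwz t)

theorem exists_hasDerivWithinAt_Icc_glue {c m d : ℝ} (hcm : c ≤ m) (hmd : m ≤ d)
    {y z : ℝ → E} (hy : ∀ t ∈ Icc c m, HasDerivWithinAt y (G t (y t)) (Icc c m) t)
    (hz : ∀ t ∈ Icc m d, HasDerivWithinAt z (G t (z t)) (Icc m d) t) (hm : y m = z m) :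
    ∃ w : ℝ → E, EqOn w y (Icc c m) ∧ EqOn w z (Icc m d) ∧
      ∀ t ∈ Icc c d, HasDerivWithinAt w (G t (w t)) (Icc c d) t := by
  classical
  have hwy : EqOn (fun t => if t ≤ m then y t else z t) y (Icc c m) := fun t ht => if_pos ht.2
  have hwz : EqOn (fun t => if t ≤ m then y t else z t) z (Icc m d) := by
    intro t ht
    rcases ht.1.eq_or_lt with rfl | hlt
    · exact if_pos le_rfl |>.trans hm
    · exact if_neg hlt.not_ge
  refine ⟨_, hwy, hwz, ?_⟩
  rw [← Icc_union_Icc_eq_Icc hcm hmd]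
  exact hasDerivWithinAt_union_of_eqOn isClosed_Icc isClosed_Icc hy hz hwy hwz

theorem eqOn_Ioo_of_hasDerivAt {c d t₀ : ℝ} {K : ℝ≥0}
    (hK : ∀ t ∈ Ioo c d, LipschitzWith K (G t)) (ht₀ : t₀ ∈ Ioo c d) {y z : ℝ → E}
    (hy : ∀ t ∈ Ioo c d, HasDerivAt y (G t (y t)) t)
    (hz : ∀ t ∈ Ioo c d, HasDerivAt z (G t (z t)) t) (h : y t₀ = z t₀) :
    EqOn y z (Ioo c d) :=
  ODE_solution_unique_of_mem_Ioo (s := fun _ => univ) (fun t ht => (hK t ht).lipschitzOnWith)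
    ht₀ (fun t ht => ⟨hy t ht, trivial⟩) (fun t ht => ⟨hz t ht, trivial⟩) h

theorem eq_of_forall_hasDerivAt
    (hL : ∀ a b : ℝ, ∃ K : ℝ≥0, ∀ t ∈ Icc a b, LipschitzWith K (G t)) {t₀ : ℝ}
    {y z : ℝ → E} (hy : ∀ t, HasDerivAt y (G t (y t)) t)
    (hz : ∀ t, HasDerivAt z (G t (z t)) t) (h : y t₀ = z t₀) : y = z := by
  funext t
  obtain ⟨K, hK⟩ := hL (min t t₀ - 1) (max t t₀ + 1)
  refine eqOn_Ioo_of_hasDerivAt (fun s hs => hK s (Ioo_subset_Icc_self hs)) ?_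
    (fun s _ => hy s) (fun s _ => hz s) h ?_ <;>
  constructor <;>
  linarith [min_le_left t t₀, min_le_right t t₀, le_max_left t t₀, le_max_right t t₀]

variable [CompleteSpace E]

theorem exists_hasDerivWithinAt_Icc_local
    (hG : Continuous fun p : ℝ × E => G p.1 p.2) {c s d : ℝ} {K : ℝ≥0}
    (hK : ∀ t ∈ Icc c d, LipschitzWith K (G t)) (hs : s ∈ Icc c d)
    (hshort : K * max (d - s) (s - c) ≤ 1 / 2) (y₀ : E) :
    ∃ y : ℝ → E, y s = y₀ ∧
      ∀ t ∈ Icc c d, HasDerivWithinAt y (G t (y t)) (Icc c d) t := by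
  have hGy₀ : Continuous fun t => G t y₀ := hG.comp (continuous_id.prodMk continuous_const)
  obtain ⟨M, hM⟩ := isCompact_Icc.exists_bound_of_continuousOn hGy₀.continuousOn
  lift M to ℝ≥0 using (norm_nonneg _).trans (hM s hs)
  obtain ⟨ε, hε⟩ : ∃ ε : ℝ≥0, (ε : ℝ) = max (d - s) (s - c) :=
    ⟨⟨_, le_max_of_le_left (sub_nonneg.2 hs.2)⟩, rfl⟩
  rw [← hε] at hshort
  -- On the ball of radius `R = 2Mε` around `y₀` the field is bounded by `M + KR`,
  -- and `(M + KR) ε ≤ R` because `Kε ≤ 1/2`.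
  have hpl : IsPicardLindelof G (tmin := c) (tmax := d) ⟨s, hs⟩ y₀ (2 * M * ε) 0
      (M + K * (2 * M * ε)) K :=
    { lipschitzOnWith := fun t ht => (hK t ht).lipschitzOnWith
      continuousOn := fun x _ => (hG.comp (continuous_id.prodMk continuous_const)).continuousOn
      norm_le := fun t ht x hx => by
        have : G t x ∈ closedBall (G t y₀) (K * (2 * M * ε)) := by
          rw [mem_closedBall] at hx ⊢
          exact ((hK t ht).dist_le_mul x y₀).trans (by gcongr; exact_mod_cast hx)
        exact (norm_le_of_mem_closedBall this).trans (by push_cast; gcongr; exact hM t ht)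
      mul_max_le := by
        change _ * max (d - s) (s - c) ≤ _
        rw [← hε]
        push_cast
        have := mul_le_mul_of_nonneg_left hshort (by positivity : (0 : ℝ) ≤ 2 * M * ε)
        linarith }
  exact hpl.exists_eq_forall_mem_Icc_hasDerivWithinAt₀

theorem exists_hasDerivWithinAt_Icc_extend_right
    (hG : Continuous fun p : ℝ × E => G p.1 p.2) {c m d : ℝ} {K : ℝ≥0}
    (hK : ∀ t ∈ Icc m d, LipschitzWith K (G t)) (hcm : c ≤ m) (hmd : m ≤ d)
    (hshort : K * (d - m) ≤ 1 / 2) {y : ℝ → E}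
    (hy : ∀ t ∈ Icc c m, HasDerivWithinAt y (G t (y t)) (Icc c m) t) :
    ∃ w : ℝ → E, EqOn w y (Icc c m) ∧
      ∀ t ∈ Icc c d, HasDerivWithinAt w (G t (w t)) (Icc c d) t := by
  obtain ⟨z, hz, hzG⟩ := exists_hasDerivWithinAt_Icc_local hG hK ⟨le_rfl, hmd⟩
    (by rwa [sub_self, max_eq_left (sub_nonneg.2 hmd)]) (y m)
  obtain ⟨w, hwy, -, hwG⟩ := exists_hasDerivWithinAt_Icc_glue hcm hmd hy hzG hz.symm
  exact ⟨w, hwy, hwG⟩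

theorem exists_hasDerivWithinAt_Icc_extend_left
    (hG : Continuous fun p : ℝ × E => G p.1 p.2) {c m d : ℝ} {K : ℝ≥0}
    (hK : ∀ t ∈ Icc c m, LipschitzWith K (G t)) (hcm : c ≤ m) (hmd : m ≤ d)
    (hshort : K * (m - c) ≤ 1 / 2) {z : ℝ → E}
    (hz : ∀ t ∈ Icc m d, HasDerivWithinAt z (G t (z t)) (Icc m d) t) :
    ∃ w : ℝ → E, EqOn w z (Icc m d) ∧
      ∀ t ∈ Icc c d, HasDerivWithinAt w (G t (w t)) (Icc c d) t := by
  obtain ⟨y, hy, hyG⟩ := exists_hasDerivWithinAt_Icc_local hG hK ⟨hcm, le_rfl⟩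
    (by rwa [sub_self, max_eq_right (sub_nonneg.2 hcm)]) (z m)
  obtain ⟨w, -, hwz, hwG⟩ := exists_hasDerivWithinAt_Icc_glue hcm hmd hyG hz hy
  exact ⟨w, hwz, hwG⟩

theorem exists_hasDerivWithinAt_Icc
    (hG : Continuous fun p : ℝ × E => G p.1 p.2) {a b t₀ : ℝ} {K : ℝ≥0}
    (hK : ∀ t ∈ Icc a b, LipschitzWith K (G t)) (ht₀ : t₀ ∈ Icc a b) (y₀ : E) :
    ∃ y : ℝ → E, y t₀ = y₀ ∧
      ∀ t ∈ Icc a b, HasDerivWithinAt y (G t (y t)) (Icc a b) t := by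
  set ε : ℝ := (2 * K + 1)⁻¹
  have hε : 0 < ε := by positivity
  have hKε : K * ε ≤ 1 / 2 := by
    rw [← div_eq_mul_inv, div_le_iff₀ (by positivity)]
    linarith
  have hK' : ∀ {c d}, a ≤ c → d ≤ b → ∀ t ∈ Icc c d, LipschitzWith K (G t) :=
    fun hac hdb t ht => hK t (Icc_subset_Icc hac hdb ht)
  have hnear : ∀ c d, a ≤ c → c ≤ t₀ → t₀ ≤ d → d ≤ b → d - t₀ ≤ ε → t₀ - c ≤ ε →
      ∃ y : ℝ → E, y t₀ = y₀ ∧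
        ∀ t ∈ Icc c d, HasDerivWithinAt y (G t (y t)) (Icc c d) t :=
    fun c d hac hct htd hdb hd hc => exists_hasDerivWithinAt_Icc_local hG (hK' hac hdb)
      ⟨hct, htd⟩ (hKε.trans' (by gcongr; exact max_le hd hc)) y₀
  have hsteps : ∀ k : ℕ, ∀ c d, a ≤ c → c ≤ t₀ → t₀ ≤ d → d ≤ b → d - c ≤ k * ε →
      ∃ y : ℝ → E, y t₀ = y₀ ∧
        ∀ t ∈ Icc c d, HasDerivWithinAt y (G t (y t)) (Icc c d) t := by
    intro k
    induction k with
    | zero =>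
      intro c d hac hct htd hdb hcd
      rw [Nat.cast_zero, zero_mul] at hcd
      exact hnear c d hac hct htd hdb (by linarith) (by linarith)
    | succ k ih =>
      intro c d hac hct htd hdb hcd
      push_cast at hcd
      by_cases hd : ε < d - t₀
      · obtain ⟨y, hy₀, hy⟩ :=
          ih c (d - ε) hac hct (by linarith) (by linarith) (by linarith)
        obtain ⟨w, hwy, hw⟩ := exists_hasDerivWithinAt_Icc_extend_right hG
          (hK' (by linarith) hdb) (by linarith) (by linarith) (by simpa using hKε) hy
        exact ⟨w, (hwy ⟨hct, by linarith⟩).trans hy₀, hw⟩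
      by_cases hc : ε < t₀ - c
      · obtain ⟨z, hz₀, hz⟩ :=
          ih (c + ε) d (by linarith) (by linarith) htd hdb (by linarith)
        obtain ⟨w, hwz, hw⟩ := exists_hasDerivWithinAt_Icc_extend_left hG
          (hK' hac (by linarith)) (by linarith) (by linarith) (by simpa using hKε) hz
        exact ⟨w, (hwz ⟨by linarith, htd⟩).trans hz₀, hw⟩
      exact hnear c d hac hct htd hdb (not_lt.1 hd) (not_lt.1 hc)
  obtain ⟨k, hk⟩ := exists_nat_ge ((b - a) / ε)
  exact hsteps k a b le_rfl ht₀.1 ht₀.2 le_rfl (by rwa [div_le_iff₀ hε] at hk)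

theorem exists_forall_hasDerivAt (hG : Continuous fun p : ℝ × E => G p.1 p.2)
    (hL : ∀ a b : ℝ, ∃ K : ℝ≥0, ∀ t ∈ Icc a b, LipschitzWith K (G t)) (t₀ : ℝ) (y₀ : E) :
    ∃ y : ℝ → E, y t₀ = y₀ ∧ ∀ t, HasDerivAt y (G t (y t)) t := by
  have hex : ∀ r : ℝ, ∃ y : ℝ → E, y t₀ = y₀ ∧
      ∀ t ∈ Ioo (t₀ - r) (t₀ + r), HasDerivAt y (G t (y t)) t := by
    intro r
    obtain ⟨K, hK⟩ := hL (t₀ - |r|) (t₀ + |r|)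
    have hr := le_abs_self r
    obtain ⟨y, hy₀, hy⟩ := exists_hasDerivWithinAt_Icc hG hK
      (show t₀ ∈ Icc (t₀ - |r|) (t₀ + |r|) by constructor <;> linarith [abs_nonneg r]) y₀
    refine ⟨y, hy₀, fun t ht => (hy t ⟨?_, ?_⟩).hasDerivAt (Icc_mem_nhds ?_ ?_)⟩ <;>
      linarith [ht.1, ht.2]
  choose Y hY₀ hY using hex
  have hagree : ∀ r r', 0 < r → r ≤ r' → EqOn (Y r') (Y r) (Ioo (t₀ - r) (t₀ + r)) := by
    intro r r' hr hrr'
    obtain ⟨K, hK⟩ := hL (t₀ - r) (t₀ + r)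
    exact eqOn_Ioo_of_hasDerivAt (fun t ht => hK t (Ioo_subset_Icc_self ht))
      (show t₀ ∈ Ioo (t₀ - r) (t₀ + r) from ⟨by linarith, by linarith⟩)
      (fun t ht => hY r' t ⟨by linarith [ht.1], by linarith [ht.2]⟩)
      (hY r) (by rw [hY₀, hY₀])
  have hmem : ∀ s, s ∈ Ioo (t₀ - (|s - t₀| + 1)) (t₀ + (|s - t₀| + 1)) := fun s => by
    constructor <;> linarith [le_abs_self (s - t₀), neg_abs_le (s - t₀)]
  refine ⟨fun t => Y (|t - t₀| + 1) t, by simpa using hY₀ 1, fun t => ?_⟩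
  have heq : EqOn (fun s => Y (|s - t₀| + 1) s) (Y (|t - t₀| + 1))
      (Ioo (t₀ - (|t - t₀| + 1)) (t₀ + (|t - t₀| + 1))) := by
    intro s hs
    rcases le_total (|s - t₀| + 1) (|t - t₀| + 1) with h | h
    · exact (hagree _ _ (by positivity) h (hmem s)).symm
    · exact hagree _ _ (by positivity) h hs
  exact (hY _ t (hmem t)).congr_of_eventuallyEq
    (heq.eventuallyEq_of_mem (isOpen_Ioo.mem_nhds (hmem t)))

end FirstOrder

theorem contDiff_two_of_hasDerivAt_of_hasDerivAt {E : Type*} [NormedAddCommGroup E]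
    [NormedSpace ℝ E] {F : ℝ × E → E} (hF : Continuous F) {x v : ℝ → E}
    (hx : ∀ t, HasDerivAt x (v t) t) (hv : ∀ t, HasDerivAt v (F (t, x t)) t) :
    ContDiff ℝ 2 x := by
  have hdx : deriv x = v := funext fun t => (hx t).deriv
  have hdv : deriv v = fun t => F (t, x t) := funext fun t => (hv t).deriv
  have hxc : Continuous x := continuous_iff_continuousAt.2 fun t => (hx t).continuousAt
  rw [show (2 : WithTop ℕ∞) = 1 + 1 from rfl, contDiff_succ_iff_deriv, hdx,
    contDiff_one_iff_deriv, hdv]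
  exact ⟨fun t => (hx t).differentiableAt, by simp, fun t => (hv t).differentiableAt,
    hF.comp (continuous_id.prodMk hxc)⟩

/-- Global existence and uniqueness for the second-order ODE
`x'' = F(t, x)` when `F` is continuous and Lipschitz in the second variable,
uniformly on compact time intervals. -/
theorem stmt_3 (n : ℕ) (F : ℝ × EuclideanSpace ℝ (Fin n) → EuclideanSpace ℝ (Fin n))
    (hF : Continuous F)
    (hLip : ∀ a b : ℝ, ∃ L : ℝ, 0 < L ∧
      ∀ t ∈ Set.Icc a b, ∀ x y : EuclideanSpace ℝ (Fin n),
        ‖F (t, x) - F (t, y)‖ ≤ L * ‖x - y‖)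
    (t₀ : ℝ) (x₀ x₁ : EuclideanSpace ℝ (Fin n)) :
    ∃! x : ℝ → EuclideanSpace ℝ (Fin n),
      ContDiff ℝ 2 x ∧ x t₀ = x₀ ∧ deriv x t₀ = x₁ ∧
        ∀ t : ℝ, deriv (deriv x) t = F (t, x t) := by
  set G : ℝ → EuclideanSpace ℝ (Fin n) × EuclideanSpace ℝ (Fin n) → _ :=
    fun t p => (p.2, F (t, p.1))
  have hG : Continuous fun p : ℝ × _ => G p.1 p.2 := by fun_prop
  have hGL : ∀ a b : ℝ, ∃ K : ℝ≥0, ∀ t ∈ Icc a b, LipschitzWith K (G t) := by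
    intro a b
    obtain ⟨L, hL, hFL⟩ := hLip a b
    refine ⟨_, fun t ht => LipschitzWith.prod_snd.prodMk
      ((LipschitzWith.of_dist_le_mul (f := fun x => F (t, x)) (K := ⟨L, hL.le⟩)
        fun x y => ?_).comp LipschitzWith.prod_fst)⟩
    rw [dist_eq_norm, dist_eq_norm]
    exact hFL t ht x y
  obtain ⟨y, hy₀, hy⟩ := exists_forall_hasDerivAt hG hGL t₀ (x₀, x₁)
  have hx t : HasDerivAt (fun t => (y t).1) (y t).2 t :=
    (hasFDerivAt_fst (p := y t)).comp_hasDerivAt t (hy t)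
  have hv t : HasDerivAt (fun t => (y t).2) (F (t, (y t).1)) t :=
    (hasFDerivAt_snd (p := y t)).comp_hasDerivAt t (hy t)
  have hdx : deriv (fun t => (y t).1) = fun t => (y t).2 := funext fun t => (hx t).deriv
  refine ⟨fun t => (y t).1, ⟨contDiff_two_of_hasDerivAt_of_hasDerivAt hF hx hv, by simp [hy₀],
    by simp [hdx, hy₀], fun t => by rw [hdx]; exact (hv t).deriv⟩, ?_⟩
  rintro z ⟨hz, hz₀, hz₁, hzF⟩
  have hzG t : HasDerivAt (fun t => (z t, deriv z t)) (G t (z t, deriv z t)) t :=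
    (hz.differentiable two_ne_zero t).hasDerivAt.prodMk
      (hzF t ▸ (hz.differentiable_deriv_two t).hasDerivAt)
  have hzy := eq_of_forall_hasDerivAt (t₀ := t₀) hGL hzG hy (by simp [hz₀, hz₁, hy₀])
  exact funext fun t => congrArg Prod.fst (congrFun hzy t)
end

section
/- Consider on ℝ^{n+2} with coordinates (u, v, x¹, …, xⁿ) the Lorentzian metric g^H = 2 du dv + 2H(u,x) du² + ∑ᵢ (dxⁱ)². If all second partial derivatives of H with respect to the xⁱ-variables are uniformly bounded, then (ℝ^{n+2}, g^H) is geodesically complete. -/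
open scoped BigOperators

/-- Partial derivative in the `i`-th coordinate direction. -/
noncomputable def pd {m : ℕ} (i : Fin m) (f : (Fin m → ℝ) → ℝ) (x : Fin m → ℝ) : ℝ :=
  fderiv ℝ f x (Pi.single i 1)

/-- Christoffel symbols `Γ^k_{ij}` of a metric given as a matrix-valued function. -/
noncomputable def christoffel {m : ℕ} (g : (Fin m → ℝ) → Matrix (Fin m) (Fin m) ℝ)
    (x : Fin m → ℝ) (k i j : Fin m) : ℝ :=
  (1 / 2) * ∑ l : Fin m, (g x)⁻¹ k l *
    (pd i (fun y => g y l j) x + pd j (fun y => g y l i) x - pd l (fun y => g y i j) x)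

/-- `γ` is a geodesic of the metric `g` on the set `s ⊆ ℝ`. -/
def IsGeodesicOn {m : ℕ} (g : (Fin m → ℝ) → Matrix (Fin m) (Fin m) ℝ)
    (γ : ℝ → Fin m → ℝ) (s : Set ℝ) : Prop :=
  ContDiffOn ℝ 2 γ s ∧ ∀ t ∈ s, ∀ k : Fin m,
    deriv (deriv γ) t k =
      -∑ i : Fin m, ∑ j : Fin m, christoffel g (γ t) k i j * deriv γ t i * deriv γ t j

/-- The standard pp-wave metric `g^H = 2 du dv + 2H(u,x) du² + ∑ (dxⁱ)²` on `ℝ^{n+2}`,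
with coordinates `p 0 = u`, `p 1 = v`, `p (i+2) = xⁱ`. -/
noncomputable def ppMetric {n : ℕ} (H : ℝ → (Fin n → ℝ) → ℝ)
    (p : Fin (n + 2) → ℝ) : Matrix (Fin (n + 2)) (Fin (n + 2)) ℝ :=
  Matrix.of fun i j =>
    if i = 0 ∧ j = 0 then 2 * H (p 0) (fun k => p k.succ.succ)
    else if (i = 0 ∧ j = 1) ∨ (i = 1 ∧ j = 0) then 1
    else if i = j ∧ i ≠ 0 ∧ i ≠ 1 then 1 else 0

open Set Topology
open scoped NNReal

variable {E : Type*} [NormedAddCommGroup E] [NormedSpace ℝ E] [CompleteSpace E]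

/-- Local existence with uniform time step for globally Lipschitz ODE. -/
theorem local_exist {F : ℝ → E → E} {K : ℝ≥0}
    (hlip : ∀ t, LipschitzWith K (F t))
    (hcont : Continuous (fun p : ℝ × E => F p.1 p.2)) (a : ℝ) (x₀ : E) :
    ∃ f : ℝ → E, f a = x₀ ∧ ∀ t ∈ Icc (a - (1/(2*(K+1)))) (a + (1/(2*(K+1)))),
      HasDerivWithinAt f (F t (f t)) (Icc (a - (1/(2*(K+1)))) (a + (1/(2*(K+1))))) t := by
  set h : ℝ := 1/(2*(K+1)) with hh
  have hpos : 0 < h := by positivity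
  have hcx : Continuous (fun t : ℝ => ‖F t x₀‖) :=
    (hcont.comp (continuous_id.prodMk continuous_const)).norm
  obtain ⟨tm, htm, hmax⟩ := (isCompact_Icc (a := a - h) (b := a + h)).exists_isMaxOn
    (nonempty_Icc.mpr (by linarith)) hcx.continuousOn
  set M : ℝ := ‖F tm x₀‖ with hM
  have hM0 : 0 ≤ M := norm_nonneg _
  have hPL : IsPicardLindelof F (tmin := a - h) (tmax := a + h)
      ⟨a, by constructor <;> linarith⟩ x₀ ⟨M, hM0⟩ 0
      ⟨M + K * M, add_nonneg hM0 (mul_nonneg K.2 hM0)⟩ K := by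
    refine ⟨fun t _ => (hlip t).lipschitzOnWith,
      fun x _ => (hcont.comp (continuous_id.prodMk continuous_const)).continuousOn,
      fun t ht x hx => ?_, ?_⟩
    · have h1 : ‖F t x₀‖ ≤ M := hmax ht
      have h2 : ‖F t x - F t x₀‖ ≤ K * ‖x - x₀‖ := by
        simpa [dist_eq_norm] using (hlip t).dist_le_mul x x₀
      have h3 : ‖x - x₀‖ ≤ M := by have := Metric.mem_closedBall.mp hx; rw [dist_eq_norm] at this; exact this
      have h4 : (K:ℝ) * ‖x - x₀‖ ≤ K * M := mul_le_mul_of_nonneg_left h3 K.2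
      calc ‖F t x‖ ≤ ‖F t x₀‖ + ‖F t x - F t x₀‖ := norm_le_insert' _ _
        _ ≤ M + K * M := by linarith
    · show (M + K * M) * max (a + h - a) (a - (a - h)) ≤ M - 0
      have he : max (a + h - a) (a - (a - h)) = h := by simp
      rw [he]
      have h5 : (M + K * M) * h = M * ((1 + K) * h) := by ring
      have hK1 : (0:ℝ) < 2*(K+1) := by positivity
      have h6 : (1 + (K:ℝ)) * h = 1/2 := by rw [hh]; field_simp; ring
      rw [h5, h6]; linarith
  exact hPL.exists_eq_forall_mem_Icc_hasDerivWithinAt₀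

variable {E : Type*} [NormedAddCommGroup E] [NormedSpace ℝ E]

theorem glue_ode {F : ℝ → E → E} {f g : ℝ → E} {a b c : ℝ} (hab : a ≤ b) (hbc : b ≤ c)
    (hf : ∀ t ∈ Icc a b, HasDerivWithinAt f (F t (f t)) (Icc a b) t)
    (hg : ∀ t ∈ Icc b c, HasDerivWithinAt g (F t (g t)) (Icc b c) t)
    (hfg : f b = g b) :
    ∀ t ∈ Icc a c, HasDerivWithinAt (fun s => if s ≤ b then f s else g s)
      (F t (if t ≤ b then f t else g t)) (Icc a c) t := by
  intro t ht
  set φ : ℝ → E := fun s => if s ≤ b then f s else g s with hφ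
  rcases lt_trichotomy t b with h1 | h1 | h1
  · have hmem : Icc a b ∈ 𝓝[Icc a c] t :=
      Filter.mem_of_superset
        (Filter.inter_mem self_mem_nhdsWithin
          (mem_nhdsWithin_of_mem_nhds (Filter.mem_of_superset (Iio_mem_nhds h1) Iio_subset_Iic_self)))
        (fun s hs => ⟨hs.1.1, hs.2⟩)
    have hd := (hf t ⟨ht.1, h1.le⟩).mono_of_mem_nhdsWithin hmem
    have heq : φ =ᶠ[𝓝[Icc a c] t] f := by
      filter_upwards [mem_nhdsWithin_of_mem_nhds (Iio_mem_nhds h1)] with s hs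
      exact if_pos (le_of_lt hs)
    rw [if_pos h1.le]
    exact hd.congr_of_eventuallyEq heq (if_pos h1.le)
  · subst h1
    rw [if_pos le_rfl]
    have hl : HasDerivWithinAt φ (F t (f t)) (Icc a c ∩ Iic t) t := by
      refine ((hf t ⟨hab, le_rfl⟩).mono (fun s hs => ⟨hs.1.1, hs.2⟩)).congr
        (fun s hs => if_pos hs.2) (if_pos le_rfl)
    have hr : HasDerivWithinAt φ (F t (f t)) (Icc a c ∩ Ici t) t := by
      have h2 := (hg t ⟨le_rfl, hbc⟩).mono (s := Icc a c ∩ Ici t) (fun s hs => ⟨hs.2, hs.1.2⟩)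
      rw [← hfg] at h2
      refine h2.congr (fun s hs => ?_) (by simp only [hφ, if_pos le_rfl]; exact hfg)
      rcases eq_or_lt_of_le (mem_Ici.mp hs.2) with h3 | h3
      · rw [hφ]; simp only [← h3, if_pos le_rfl]; exact hfg
      · exact if_neg (not_le.mpr h3)
    have h4 := hl.union hr
    rwa [← inter_union_distrib_left, Iic_union_Ici, inter_univ] at h4
  · have hmem : Icc b c ∈ 𝓝[Icc a c] t :=
      Filter.mem_of_superset
        (Filter.inter_mem self_mem_nhdsWithin
          (mem_nhdsWithin_of_mem_nhds (Filter.mem_of_superset (Ioi_mem_nhds h1) Ioi_subset_Ici_self)))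
        (fun s hs => ⟨hs.2, hs.1.2⟩)
    have hd := (hg t ⟨h1.le, ht.2⟩).mono_of_mem_nhdsWithin hmem
    have heq : φ =ᶠ[𝓝[Icc a c] t] g := by
      filter_upwards [mem_nhdsWithin_of_mem_nhds (Ioi_mem_nhds h1)] with s hs
      exact if_neg (not_le.mpr hs)
    rw [if_neg (not_le.mpr h1)]
    exact hd.congr_of_eventuallyEq heq (if_neg (not_le.mpr h1))

variable {E : Type*} [NormedAddCommGroup E] [NormedSpace ℝ E] [CompleteSpace E]



theorem exist_on_Icc {F : ℝ → E → E} {K : ℝ≥0}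
    (hlip : ∀ t, LipschitzWith K (F t))
    (hcont : Continuous (fun p : ℝ × E => F p.1 p.2)) (t₀ : ℝ) (x₀ : E) (m : ℕ) :
    ∃ f : ℝ → E, f t₀ = x₀ ∧ ∀ t ∈ Icc (t₀ - (m+1)*(1/(2*(K+1)))) (t₀ + (m+1)*(1/(2*(K+1)))),
      HasDerivWithinAt f (F t (f t))
        (Icc (t₀ - (m+1)*(1/(2*(K+1)))) (t₀ + (m+1)*(1/(2*(K+1))))) t := by
  set h : ℝ := 1/(2*(K+1)) with hh
  have hpos : 0 < h := by positivity
  induction m with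
  | zero =>
    obtain ⟨f, hf0, hf⟩ := local_exist hlip hcont t₀ x₀
    exact ⟨f, hf0, by simpa only [Nat.cast_zero, zero_add, one_mul] using hf⟩
  | succ m ih =>
    obtain ⟨f, hf0, hf⟩ := ih
    set A : ℝ := t₀ - (m+1)*h with hA
    set B : ℝ := t₀ + (m+1)*h with hB
    have hAB : A ≤ B := by nlinarith
    -- extend to the right
    obtain ⟨g, hg0, hg⟩ := local_exist hlip hcont B (f B)
    have hg' : ∀ t ∈ Icc B (B + h), HasDerivWithinAt g (F t (g t)) (Icc B (B + h)) t :=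
      fun t ht => (hg t ⟨by linarith [ht.1], ht.2⟩).mono
        (fun s hs => ⟨by linarith [hs.1], hs.2⟩)
    have h1 := glue_ode hAB (by linarith) hf hg' hg0.symm
    set f₁ : ℝ → E := fun s => if s ≤ B then f s else g s with hf₁
    have hf₁0 : f₁ t₀ = x₀ := by
      rw [hf₁]; simp only; rw [if_pos (by nlinarith : t₀ ≤ B)]; exact hf0
    -- extend to the left
    obtain ⟨g₂, hg₂0, hg₂⟩ := local_exist hlip hcont A (f₁ A)
    have hg₂' : ∀ t ∈ Icc (A - h) A, HasDerivWithinAt g₂ (F t (g₂ t)) (Icc (A - h) A) t :=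
      fun t ht => (hg₂ t ⟨ht.1, by linarith [ht.2]⟩).mono
        (fun s hs => ⟨hs.1, by linarith [hs.2]⟩)
    have h2 := glue_ode (by linarith : A - h ≤ A) (by linarith : A ≤ B + h) hg₂'
      (fun t ht => h1 t ht) hg₂0
    refine ⟨fun s => if s ≤ A then g₂ s else f₁ s, ?_, ?_⟩
    · show (if t₀ ≤ A then g₂ t₀ else f₁ t₀) = x₀
      rw [if_neg (by push_neg; nlinarith : ¬ t₀ ≤ A)]; exact hf₁0
    · have e1 : t₀ - (↑(m+1)+1)*h = A - h := by rw [hA]; push_cast; ring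
      have e2 : t₀ + (↑(m+1)+1)*h = B + h := by rw [hB]; push_cast; ring
      rw [e1, e2]; exact h2

theorem global_exist {F : ℝ → E → E} {K : ℝ≥0}
    (hlip : ∀ t, LipschitzWith K (F t))
    (hcont : Continuous (fun p : ℝ × E => F p.1 p.2)) (t₀ : ℝ) (x₀ : E) :
    ∃ f : ℝ → E, f t₀ = x₀ ∧ ∀ t, HasDerivAt f (F t (f t)) t := by
  classical
  set h : ℝ := 1/(2*(K+1)) with hh
  have hpos : 0 < h := by positivity
  choose sol sol0 solD using exist_on_Icc hlip hcont t₀ x₀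
  set r : ℕ → ℝ := fun m => (m+1)*h with hr
  have hrpos : ∀ m, 0 < r m := fun m => by positivity
  have hrmono : ∀ {m m'}, m ≤ m' → r m ≤ r m' := by
    intro m m' hm
    have : (m:ℝ) ≤ m' := by exact_mod_cast hm
    rw [hr]; dsimp only; nlinarith
  -- each sol m is continuous on its interval and HasDerivAt in the interior
  have solC : ∀ m, ContinuousOn (sol m) (Icc (t₀ - r m) (t₀ + r m)) :=
    fun m t ht => ((solD m) t ht).continuousWithinAt
  have solD' : ∀ m, ∀ t ∈ Ioo (t₀ - r m) (t₀ + r m), HasDerivAt (sol m) (F t (sol m t)) t :=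
    fun m t ht => ((solD m) t (Ioo_subset_Icc_self ht)).hasDerivAt (Icc_mem_nhds ht.1 ht.2)
  -- coherence
  have coh : ∀ m m' : ℕ, m ≤ m' → ∀ t ∈ Icc (t₀ - r m) (t₀ + r m), sol m t = sol m' t := by
    intro m m' hm t ht
    have hsub : Icc (t₀ - r m) (t₀ + r m) ⊆ Icc (t₀ - r m') (t₀ + r m') :=
      Icc_subset_Icc (by linarith [hrmono hm]) (by linarith [hrmono hm])
    have hsub' : Ioo (t₀ - r m) (t₀ + r m) ⊆ Ioo (t₀ - r m') (t₀ + r m') :=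
      Ioo_subset_Ioo (by linarith [hrmono hm]) (by linarith [hrmono hm])
    refine ODE_solution_unique_of_mem_Icc (K := K) (s := fun _ => (univ : Set E))
      (fun t _ => (hlip t).lipschitzOnWith) ⟨by linarith [hrpos m], by linarith [hrpos m]⟩
      (solC m) (fun s hs => solD' m s hs) (fun _ _ => trivial)
      ((solC m').mono hsub) (fun s hs => solD' m' s (hsub' hs)) (fun _ _ => trivial)
      ((sol0 m).trans (sol0 m').symm) ht
  set idx : ℝ → ℕ := fun t => ⌈|t - t₀|/h⌉₊ with hidx
  have hidx_mem : ∀ t, t ∈ Icc (t₀ - r (idx t)) (t₀ + r (idx t)) := by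
    intro t
    have h1 : |t - t₀|/h ≤ idx t := Nat.le_ceil _
    have h2 : |t - t₀| ≤ (idx t) * h := by
      rwa [div_le_iff₀ hpos] at h1
    have h3 : |t - t₀| ≤ r (idx t) := by
      rw [hr]; dsimp only; nlinarith
    rw [abs_le] at h3
    constructor <;> [linarith [h3.1]; linarith [h3.2]]
  have hidx_int : ∀ t, t ∈ Ioo (t₀ - r (idx t)) (t₀ + r (idx t)) := by
    intro t
    have h1 : |t - t₀|/h ≤ idx t := Nat.le_ceil _
    have h2 : |t - t₀| ≤ (idx t) * h := by rwa [div_le_iff₀ hpos] at h1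
    have h3 : |t - t₀| < r (idx t) := by rw [hr]; dsimp only; nlinarith
    rw [abs_lt] at h3
    exact ⟨by linarith [h3.1], by linarith [h3.2]⟩
  have key : ∀ m t, t ∈ Icc (t₀ - r m) (t₀ + r m) → sol (idx t) t = sol m t := by
    intro m t ht
    rcases le_total (idx t) m with hc | hc
    · exact coh _ _ hc t (hidx_mem t)
    · exact (coh _ _ hc t ht).symm
  refine ⟨fun t => sol (idx t) t, ?_, ?_⟩
  · show sol (idx t₀) t₀ = x₀
    rw [key 0 t₀ ⟨by linarith [hrpos 0], by linarith [hrpos 0]⟩, sol0 0]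
  · intro t
    set N := idx t with hN
    have hIoo := hidx_int t
    have hev : (fun s => sol (idx s) s) =ᶠ[𝓝 t] sol N := by
      filter_upwards [IsOpen.mem_nhds isOpen_Ioo hIoo] with s hs
      exact key N s (Ioo_subset_Icc_self hs)
    have hd := solD' N t hIoo
    have : HasDerivAt (fun s => sol (idx s) s) (F t (sol N t)) t :=
      hd.congr_of_eventuallyEq hev
    simpa [← hN] using this

section analysis

variable {n : ℕ} {H : ℝ → (Fin n → ℝ) → ℝ}

/-- operator norm bound from entrywise bounds on `ℝⁿ` with sup norm -/
lemma opnorm_le_of_single {n : ℕ} (L : (Fin n → ℝ) →L[ℝ] ℝ) {c : ℝ} (hc : 0 ≤ c)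
    (h : ∀ i, |L (Pi.single i 1)| ≤ c) : ‖L‖ ≤ n * c := by
  refine ContinuousLinearMap.opNorm_le_bound L (by positivity) (fun w => ?_)
  have hw : w = ∑ i : Fin n, Pi.single i (w i) := (Finset.univ_sum_single w).symm
  have : L w = ∑ i : Fin n, w i * L (Pi.single i 1) := by
    conv_lhs => rw [hw]
    rw [map_sum]
    congr 1; funext i
    have : (Pi.single i (w i) : Fin n → ℝ) = w i • (Pi.single i (1:ℝ) : Fin n → ℝ) := by
      rw [← Pi.single_smul, smul_eq_mul, mul_one]
    rw [this, map_smul, smul_eq_mul]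
  rw [this]
  calc ‖∑ i : Fin n, w i * L (Pi.single i 1)‖ ≤ ∑ i : Fin n, ‖w i * L (Pi.single i 1)‖ :=
        norm_sum_le _ _
    _ ≤ ∑ _i : Fin n, c * ‖w‖ := by
        refine Finset.sum_le_sum (fun i _ => ?_)
        rw [norm_mul]
        have h1 : ‖w i‖ ≤ ‖w‖ := norm_le_pi_norm w i
        have h2 : ‖L (Pi.single i 1)‖ ≤ c := h i
        calc ‖w i‖ * ‖L (Pi.single i 1)‖ ≤ ‖w‖ * c := by
              exact mul_le_mul h1 h2 (norm_nonneg _) (norm_nonneg _)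
          _ = c * ‖w‖ := mul_comm _ _
    _ = n * c * ‖w‖ := by rw [Finset.sum_const, Finset.card_univ, Fintype.card_fin]; ring
  
variable (hH : ContDiff ℝ (⊤ : ℕ∞) (fun q : ℝ × (Fin n → ℝ) => H q.1 q.2))

include hH in
lemma contDiff_H_slice (u : ℝ) : ContDiff ℝ (⊤ : ℕ∞) (H u) :=
  hH.comp ((contDiff_const (c := u)).prodMk contDiff_id)

include hH in
lemma fderiv_partial (u : ℝ) (x : Fin n → ℝ) (ξ : Fin n → ℝ) :
    fderiv ℝ (H u) x ξ = fderiv ℝ (fun q : ℝ × (Fin n → ℝ) => H q.1 q.2) (u, x) (0, ξ) := by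
  have hdiff : DifferentiableAt ℝ (fun q : ℝ × (Fin n → ℝ) => H q.1 q.2) (u, x) :=
    (hH.differentiable (by simp)).differentiableAt
  have hcomp : HasFDerivAt (H u)
      ((fderiv ℝ (fun q : ℝ × (Fin n → ℝ) => H q.1 q.2) (u, x)).comp
        (ContinuousLinearMap.inr ℝ ℝ (Fin n → ℝ))) x :=
    hdiff.hasFDerivAt.comp x (hasFDerivAt_prodMk_right u x)
  rw [hcomp.fderiv]; rfl

include hH in
lemma cont_fderiv_full : Continuous (fderiv ℝ (fun q : ℝ × (Fin n → ℝ) => H q.1 q.2)) :=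
  (hH.fderiv_right (m := (⊤ : ℕ∞)) (by simp)).continuous

include hH in
lemma gx_cont : Continuous (fun q : ℝ × (Fin n → ℝ) =>
    (fun j => fderiv ℝ (H q.1) q.2 (Pi.single j 1) : Fin n → ℝ)) := by
  refine continuous_pi (fun j => ?_)
  have : (fun q : ℝ × (Fin n → ℝ) => fderiv ℝ (H q.1) q.2 (Pi.single j 1)) =
      (fun q : ℝ × (Fin n → ℝ) =>
        fderiv ℝ (fun q : ℝ × (Fin n → ℝ) => H q.1 q.2) q ((0 : ℝ), Pi.single j 1)) := by
    funext q; exact fderiv_partial hH q.1 q.2 _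
  rw [this]
  exact (cont_fderiv_full hH).clm_apply continuous_const

include hH in
lemma gx_lip {c : ℝ} (hc : 0 ≤ c)
    (hb : ∀ (u : ℝ) (x : Fin n → ℝ) (i j : Fin n),
      |fderiv ℝ (fun y => fderiv ℝ (H u) y (Pi.single j 1)) x (Pi.single i 1)| ≤ c) (u : ℝ) :
    LipschitzWith (Real.toNNReal (n * c))
      (fun x => (fun j => fderiv ℝ (H u) x (Pi.single j 1) : Fin n → ℝ)) := by
  have hHu : ContDiff ℝ (⊤ : ℕ∞) (H u) := contDiff_H_slice hH u
  have hfd : ContDiff ℝ (⊤ : ℕ∞) (fderiv ℝ (H u)) := hHu.fderiv_right (m := (⊤ : ℕ∞)) (by simp)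
  refine LipschitzWith.of_dist_le_mul (fun x y => ?_)
  rw [Real.coe_toNNReal _ (by positivity), dist_eq_norm, dist_eq_norm]
  rw [show (fun j => fderiv ℝ (H u) x (Pi.single j 1) : Fin n → ℝ) -
      (fun j => fderiv ℝ (H u) y (Pi.single j 1)) =
      fun j => (fderiv ℝ (H u) x (Pi.single j 1) - fderiv ℝ (H u) y (Pi.single j 1)) from rfl]
  refine (pi_norm_le_iff_of_nonneg (by positivity)).mpr (fun j => ?_)
  set ψ : (Fin n → ℝ) → ℝ := fun z => fderiv ℝ (H u) z (Pi.single j 1) with hψ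
  have hψd : Differentiable ℝ ψ := by
    have : ψ = (fun L : (Fin n → ℝ) →L[ℝ] ℝ => L (Pi.single j 1)) ∘ (fderiv ℝ (H u)) := rfl
    rw [this]
    exact (ContinuousLinearMap.apply ℝ ℝ (Pi.single j 1)).differentiable.comp
      (hfd.differentiable (by simp))
  have hbd : ∀ z : Fin n → ℝ, ‖fderiv ℝ ψ z‖ ≤ n * c := by
    intro z
    refine opnorm_le_of_single _ hc (fun i => ?_)
    exact hb u z i j
  calc ‖ψ x - ψ y‖ ≤ (n * c) * ‖x - y‖ := by
        exact convex_univ.norm_image_sub_le_of_norm_fderiv_le (fun z _ => (hψd z))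
          (fun z _ => hbd z) (mem_univ x) (mem_univ y)
    _ = (n * c) * ‖x - y‖ := rfl

end analysis




/-- candidate inverse of the pp-wave metric -/
noncomputable def ppInv {n : ℕ} (H : ℝ → (Fin n → ℝ) → ℝ)
    (p : Fin (n + 2) → ℝ) : Matrix (Fin (n + 2)) (Fin (n + 2)) ℝ :=
  Matrix.of fun i j =>
    if i = 1 ∧ j = 1 then -2 * H (p 0) (fun k => p k.succ.succ)
    else if (i = 0 ∧ j = 1) ∨ (i = 1 ∧ j = 0) then 1
    else if i = j ∧ i ≠ 0 ∧ i ≠ 1 then 1 else 0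

lemma succ_succ_ne_zero {n : ℕ} (k : Fin n) : (k.succ.succ : Fin (n + 2)) ≠ 0 :=
  Fin.succ_ne_zero _

lemma succ_succ_ne_one {n : ℕ} (k : Fin n) : (k.succ.succ : Fin (n + 2)) ≠ 1 := by
  intro h
  rw [← Fin.succ_zero_eq_one] at h
  exact Fin.succ_ne_zero _ (Fin.succ_injective _ h)

lemma sum_fin_two {n : ℕ} (f : Fin (n + 2) → ℝ) :
    ∑ l : Fin (n + 2), f l = f 0 + f 1 + ∑ k : Fin n, f k.succ.succ := by
  rw [Fin.sum_univ_succ, Fin.sum_univ_succ]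
  simp [Fin.succ_zero_eq_one, add_assoc]

lemma ppMetric_mul_inv {n : ℕ} (H : ℝ → (Fin n → ℝ) → ℝ) (q : Fin (n + 2) → ℝ) :
    ppMetric H q * ppInv H q = 1 := by
  ext i j
  rw [Matrix.mul_apply, sum_fin_two]
  induction i using Fin.cases with
  | zero =>
    induction j using Fin.cases with
    | zero =>
      simp [ppMetric, ppInv, Fin.zero_ne_one, succ_succ_ne_zero, succ_succ_ne_one,
        (Fin.zero_ne_one (n := n + 1)).symm, Matrix.one_apply]
    | succ j =>
      induction j using Fin.cases with
      | zero =>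
        simp [ppMetric, ppInv, Fin.succ_zero_eq_one, Fin.zero_ne_one, succ_succ_ne_zero,
          succ_succ_ne_one, (Fin.zero_ne_one (n := n + 1)).symm, Matrix.one_apply]
      | succ j =>
        simp [ppMetric, ppInv, Fin.zero_ne_one, succ_succ_ne_zero, succ_succ_ne_one,
          (succ_succ_ne_zero j).symm, (succ_succ_ne_one j).symm, Matrix.one_apply]
  | succ i =>
    induction i using Fin.cases with
    | zero =>
      induction j using Fin.cases with
      | zero =>
        simp [ppMetric, ppInv, Fin.succ_zero_eq_one, Fin.zero_ne_one, succ_succ_ne_zero,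
          succ_succ_ne_one, (Fin.zero_ne_one (n := n + 1)).symm, Matrix.one_apply]
      | succ j =>
        induction j using Fin.cases with
        | zero =>
          simp [ppMetric, ppInv, Fin.succ_zero_eq_one, Fin.zero_ne_one, succ_succ_ne_zero,
            succ_succ_ne_one, (Fin.zero_ne_one (n := n + 1)).symm, Matrix.one_apply]
        | succ j =>
          simp [ppMetric, ppInv, Fin.succ_zero_eq_one, Fin.zero_ne_one, succ_succ_ne_zero,
            succ_succ_ne_one, (succ_succ_ne_zero j).symm, (succ_succ_ne_one j).symm,
            Matrix.one_apply]
    | succ i =>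
      induction j using Fin.cases with
      | zero =>
        simp [ppMetric, ppInv, Fin.succ_zero_eq_one, Fin.zero_ne_one, succ_succ_ne_zero,
          succ_succ_ne_one, (Fin.zero_ne_one (n := n + 1)).symm, Matrix.one_apply,
          Fin.succ_inj]
      | succ j =>
        induction j using Fin.cases with
        | zero =>
          simp [ppMetric, ppInv, Fin.succ_zero_eq_one, Fin.zero_ne_one, succ_succ_ne_zero,
            succ_succ_ne_one, Matrix.one_apply, Fin.succ_inj]
        | succ j =>
          simp [ppMetric, ppInv, succ_succ_ne_zero, succ_succ_ne_one, Matrix.one_apply,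
            Fin.succ_inj, Finset.sum_ite_eq']

lemma ppMetric_inv {n : ℕ} (H : ℝ → (Fin n → ℝ) → ℝ) (q : Fin (n + 2) → ℝ) :
    (ppMetric H q)⁻¹ = ppInv H q :=
  Matrix.inv_eq_right_inv (ppMetric_mul_inv H q)

/-- derivative of the (0,0)-entry of the pp metric in direction `l` -/
noncomputable def dHf {n : ℕ} (H : ℝ → (Fin n → ℝ) → ℝ) (q : Fin (n + 2) → ℝ)
    (l : Fin (n + 2)) : ℝ :=
  2 * fderiv ℝ (fun q' : ℝ × (Fin n → ℝ) => H q'.1 q'.2) (q 0, fun k => q k.succ.succ)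
    ((Pi.single l (1:ℝ) : Fin (n+2) → ℝ) 0,
      fun k => (Pi.single l (1:ℝ) : Fin (n+2) → ℝ) k.succ.succ)

section

variable {n : ℕ} {H : ℝ → (Fin n → ℝ) → ℝ}
  (hH : ContDiff ℝ (⊤ : ℕ∞) (fun q : ℝ × (Fin n → ℝ) => H q.1 q.2))

include hH in
lemma pd_entry00 (l : Fin (n + 2)) (q : Fin (n + 2) → ℝ) :
    pd l (fun y => 2 * H (y 0) (fun k => y k.succ.succ)) q = dHf H q l := by
  set Λ : (Fin (n + 2) → ℝ) →L[ℝ] ℝ × (Fin n → ℝ) :=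
    (ContinuousLinearMap.proj 0).prod
      (ContinuousLinearMap.pi (fun k : Fin n => ContinuousLinearMap.proj k.succ.succ)) with hΛ
  have hΛap : ∀ y : Fin (n + 2) → ℝ, Λ y = (y 0, fun k => y k.succ.succ) := fun y => rfl
  set D := fderiv ℝ (fun q' : ℝ × (Fin n → ℝ) => H q'.1 q'.2) (Λ q) with hD
  have hDD : HasFDerivAt (fun q' : ℝ × (Fin n → ℝ) => H q'.1 q'.2) D (Λ q) :=
    ((hH.differentiable (by simp)) (Λ q)).hasFDerivAt
  have h1 : HasFDerivAt (fun y => H (Λ y).1 (Λ y).2) (D.comp Λ) q :=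
    hDD.comp q Λ.hasFDerivAt
  have h2 : HasFDerivAt (fun y => 2 * H (Λ y).1 (Λ y).2) ((2:ℝ) • (D.comp Λ)) q :=
    h1.const_mul 2
  have h3 : (fun y : Fin (n + 2) → ℝ => 2 * H (y 0) (fun k => y k.succ.succ)) =
      (fun y => 2 * H (Λ y).1 (Λ y).2) := rfl
  rw [pd, h3, h2.fderiv]
  simp only [ContinuousLinearMap.smul_apply, ContinuousLinearMap.comp_apply, smul_eq_mul]
  rw [dHf]
  congr 1

include hH in
lemma pd_ppMetric (l i j : Fin (n + 2)) (q : Fin (n + 2) → ℝ) :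
    pd l (fun y => ppMetric H y i j) q = if i = 0 ∧ j = 0 then dHf H q l else 0 := by
  by_cases hij : i = 0 ∧ j = 0
  · obtain ⟨rfl, rfl⟩ := hij
    rw [if_pos ⟨rfl, rfl⟩]
    have h3 : (fun y => ppMetric H y 0 0) =
        (fun y : Fin (n + 2) → ℝ => 2 * H (y 0) (fun k => y k.succ.succ)) := by
      funext y; simp [ppMetric]
    rw [h3, pd_entry00 hH]
  · rw [if_neg hij]
    have h3 : (fun y => ppMetric H y i j) = (fun _ : Fin (n + 2) → ℝ =>
        (if (i = 0 ∧ j = 1) ∨ (i = 1 ∧ j = 0) then (1:ℝ)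
          else if i = j ∧ i ≠ 0 ∧ i ≠ 1 then 1 else 0)) := by
      funext y; simp only [ppMetric, Matrix.of_apply, if_neg hij]
    rw [pd, h3, fderiv_fun_const]
    simp

/-- values of dHf -/
lemma dHf_zero (q : Fin (n + 2) → ℝ) :
    dHf H q 0 = 2 * fderiv ℝ (fun q' : ℝ × (Fin n → ℝ) => H q'.1 q'.2)
      (q 0, fun k => q k.succ.succ) (1, 0) := by
  have h1 : ((Pi.single (0 : Fin (n+2)) (1:ℝ) : Fin (n+2) → ℝ) 0,
      fun k => (Pi.single (0 : Fin (n+2)) (1:ℝ) : Fin (n+2) → ℝ) k.succ.succ)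
      = ((1:ℝ), (0 : Fin n → ℝ)) := by
    refine Prod.ext ?_ ?_
    · simp [Pi.single_apply]
    · funext k; simp [Pi.single_apply, succ_succ_ne_zero k]
  rw [dHf, h1]

lemma dHf_one (q : Fin (n + 2) → ℝ) : dHf H q 1 = 0 := by
  rw [dHf]
  have h1 : ((Pi.single (1 : Fin (n+2)) (1:ℝ) : Fin (n+2) → ℝ) 0,
      fun k => (Pi.single (1 : Fin (n+2)) (1:ℝ) : Fin (n+2) → ℝ) k.succ.succ)
      = ((0:ℝ), (0 : Fin n → ℝ)) := by
    refine Prod.ext ?_ ?_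
    · simp [Pi.single_apply, (Fin.zero_ne_one (n := n+1))]
    · funext k; simp [Pi.single_apply, succ_succ_ne_one k]
  rw [h1]
  have h2 : ((0:ℝ), (0 : Fin n → ℝ)) = (0 : ℝ × (Fin n → ℝ)) := rfl
  rw [h2, ContinuousLinearMap.map_zero, mul_zero]

include hH in
lemma dHf_succ (q : Fin (n + 2) → ℝ) (k : Fin n) :
    dHf H q k.succ.succ = 2 * fderiv ℝ (H (q 0)) (fun m => q m.succ.succ) (Pi.single k 1) := by
  rw [dHf, fderiv_partial hH]
  congr 2
  have hinj : Function.Injective (fun m : Fin n => (m.succ.succ : Fin (n+2))) :=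
    fun a b h => Fin.succ_injective _ (Fin.succ_injective _ h)
  have h1 : ((Pi.single (k.succ.succ : Fin (n+2)) (1:ℝ) : Fin (n+2) → ℝ) 0,
      fun m => (Pi.single (k.succ.succ : Fin (n+2)) (1:ℝ) : Fin (n+2) → ℝ) m.succ.succ)
      = ((0:ℝ), (Pi.single k (1:ℝ) : Fin n → ℝ)) := by
    refine Prod.ext ?_ ?_
    · simp [Pi.single_apply, (succ_succ_ne_zero k).symm]
    · funext m
      simp only [Pi.single_apply]
      rcases eq_or_ne m k with rfl | hmk
      · simp
      · rw [if_neg (fun h => hmk (hinj h)), if_neg hmk]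
  exact h1

end

section christoffelComp

variable {n : ℕ} {H : ℝ → (Fin n → ℝ) → ℝ}
  (hH : ContDiff ℝ (⊤ : ℕ∞) (fun q : ℝ × (Fin n → ℝ) => H q.1 q.2))

variable (H) in
@[simp] lemma ppInv_00 (q : Fin (n+2) → ℝ) : ppInv H q 0 0 = 0 := by
  simp [ppInv, Fin.zero_ne_one]
variable (H) in
@[simp] lemma ppInv_01 (q : Fin (n+2) → ℝ) : ppInv H q 0 1 = 1 := by
  simp [ppInv, Fin.zero_ne_one]
variable (H) in
@[simp] lemma ppInv_0s (q : Fin (n+2) → ℝ) (k : Fin n) : ppInv H q 0 k.succ.succ = 0 := by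
  simp [ppInv, Fin.zero_ne_one, succ_succ_ne_zero k, succ_succ_ne_one k, (succ_succ_ne_zero k).symm, (succ_succ_ne_one k).symm]
variable (H) in
@[simp] lemma ppInv_10 (q : Fin (n+2) → ℝ) : ppInv H q 1 0 = 1 := by
  simp [ppInv, Fin.zero_ne_one, (Fin.zero_ne_one (n := n+1)).symm]
variable (H) in
@[simp] lemma ppInv_11 (q : Fin (n+2) → ℝ) :
    ppInv H q 1 1 = -2 * H (q 0) (fun k => q k.succ.succ) := by
  simp [ppInv]
variable (H) in
@[simp] lemma ppInv_1s (q : Fin (n+2) → ℝ) (k : Fin n) : ppInv H q 1 k.succ.succ = 0 := by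
  simp [ppInv, (Fin.zero_ne_one (n := n+1)).symm, Fin.zero_ne_one, succ_succ_ne_zero k, succ_succ_ne_one k, (succ_succ_ne_zero k).symm, (succ_succ_ne_one k).symm]
variable (H) in
@[simp] lemma ppInv_s0 (q : Fin (n+2) → ℝ) (k : Fin n) : ppInv H q k.succ.succ 0 = 0 := by
  simp [ppInv, Fin.zero_ne_one, (Fin.zero_ne_one (n := n+1)).symm, succ_succ_ne_zero k, succ_succ_ne_one k, (succ_succ_ne_zero k).symm, (succ_succ_ne_one k).symm]
variable (H) in
@[simp] lemma ppInv_s1 (q : Fin (n+2) → ℝ) (k : Fin n) : ppInv H q k.succ.succ 1 = 0 := by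
  simp [ppInv, Fin.zero_ne_one, (Fin.zero_ne_one (n := n+1)).symm, succ_succ_ne_zero k, succ_succ_ne_one k, (succ_succ_ne_zero k).symm, (succ_succ_ne_one k).symm]
variable (H) in
@[simp] lemma ppInv_ss (q : Fin (n+2) → ℝ) (a b : Fin n) :
    ppInv H q a.succ.succ b.succ.succ = if a = b then 1 else 0 := by
  rcases eq_or_ne a b with rfl | hab
  · simp [ppInv, succ_succ_ne_zero a, succ_succ_ne_one a, (succ_succ_ne_zero a).symm, (succ_succ_ne_one a).symm]
  · have : (a.succ.succ : Fin (n+2)) ≠ b.succ.succ := by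
      intro h; exact hab (Fin.succ_injective _ (Fin.succ_injective _ h))
    simp [ppInv, this, hab, succ_succ_ne_zero a, succ_succ_ne_one a, (succ_succ_ne_zero a).symm, (succ_succ_ne_one a).symm, succ_succ_ne_zero b, succ_succ_ne_one b, (succ_succ_ne_zero b).symm, (succ_succ_ne_one b).symm]

include hH in
lemma christoffel_zero (q : Fin (n+2) → ℝ) (i j : Fin (n+2)) :
    christoffel (ppMetric H) q 0 i j = 0 := by
  rw [christoffel, ppMetric_inv, sum_fin_two]
  simp only [pd_ppMetric hH, ppInv_00, ppInv_01, ppInv_0s, dHf_one, zero_mul, one_mul]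
  by_cases hi : i = 0 <;> by_cases hj : j = 0 <;>
    simp [hi, hj, Fin.zero_ne_one, dHf_one]

include hH in
lemma christoffel_succ (q : Fin (n+2) → ℝ) (m : Fin n) (i j : Fin (n+2)) :
    christoffel (ppMetric H) q m.succ.succ i j =
      if i = 0 ∧ j = 0 then
        -(fderiv ℝ (H (q 0)) (fun k => q k.succ.succ) (Pi.single m 1)) else 0 := by
  rw [christoffel, ppMetric_inv, sum_fin_two]
  simp only [pd_ppMetric hH, ppInv_s0, ppInv_s1, ppInv_ss, zero_mul, ite_mul, one_mul]
  by_cases hi : i = 0 <;> by_cases hj : j = 0 <;>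
    simp [hi, hj, succ_succ_ne_zero m, succ_succ_ne_one m, (succ_succ_ne_zero m).symm,
      (succ_succ_ne_one m).symm, Finset.sum_ite_eq, dHf_succ hH] <;> ring

include hH in
lemma christoffel_one (q : Fin (n+2) → ℝ) (i j : Fin (n+2)) :
    christoffel (ppMetric H) q 1 i j =
      (1/2) * ((if j = 0 then dHf H q i else 0) + (if i = 0 then dHf H q j else 0)) -
        (if i = 0 ∧ j = 0 then
          fderiv ℝ (fun q' : ℝ × (Fin n → ℝ) => H q'.1 q'.2)
            (q 0, fun k => q k.succ.succ) (1, 0) else 0) := by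
  rw [christoffel, ppMetric_inv, sum_fin_two]
  simp only [pd_ppMetric hH, ppInv_10, ppInv_11, ppInv_1s, dHf_one, zero_mul, one_mul]
  by_cases hi : i = 0 <;> by_cases hj : j = 0 <;>
    simp [hi, hj, Fin.zero_ne_one, (Fin.zero_ne_one (n := n+1)).symm, dHf_one, dHf_zero] <;> ring

end christoffelComp

section geodSum

variable {n : ℕ} {H : ℝ → (Fin n → ℝ) → ℝ}
  (hH : ContDiff ℝ (⊤ : ℕ∞) (fun q : ℝ × (Fin n → ℝ) => H q.1 q.2))

include hH in
lemma geod_sum_zero (q : Fin (n+2) → ℝ) (d : Fin (n+2) → ℝ) :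
    -∑ i : Fin (n+2), ∑ j : Fin (n+2),
      christoffel (ppMetric H) q 0 i j * d i * d j = 0 := by
  simp [christoffel_zero hH]

include hH in
lemma geod_sum_succ (q : Fin (n+2) → ℝ) (d : Fin (n+2) → ℝ) (m : Fin n) :
    -∑ i : Fin (n+2), ∑ j : Fin (n+2),
      christoffel (ppMetric H) q m.succ.succ i j * d i * d j =
      fderiv ℝ (H (q 0)) (fun k => q k.succ.succ) (Pi.single m 1) * (d 0 * d 0) := by
  simp only [christoffel_succ hH, ite_mul, zero_mul, sum_fin_two]
  simp [Fin.zero_ne_one, (Fin.zero_ne_one (n := n+1)).symm, succ_succ_ne_zero, succ_succ_ne_one]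
  ring

include hH in
lemma geod_sum_one (q : Fin (n+2) → ℝ) (d : Fin (n+2) → ℝ) :
    -∑ i : Fin (n+2), ∑ j : Fin (n+2),
      christoffel (ppMetric H) q 1 i j * d i * d j =
      -(fderiv ℝ (fun q' : ℝ × (Fin n → ℝ) => H q'.1 q'.2)
          (q 0, fun k => q k.succ.succ) (1, 0) * (d 0 * d 0))
        - 2 * d 0 * ∑ k : Fin n,
            fderiv ℝ (H (q 0)) (fun m => q m.succ.succ) (Pi.single k 1) * d k.succ.succ := by
  simp only [christoffel_one hH, sum_fin_two]
  simp [Fin.zero_ne_one, (Fin.zero_ne_one (n := n+1)).symm, succ_succ_ne_zero, succ_succ_ne_one,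
    dHf_zero, dHf_one, dHf_succ hH, sub_mul, ite_mul, zero_mul, mul_ite, mul_zero,
    Finset.sum_add_distrib, Finset.sum_sub_distrib, Finset.mul_sum]
  ring_nf
  have e1 : (∑ x : Fin n, (fderiv ℝ (H (q 0)) fun k => q k.succ.succ) (Pi.single x 1) *
        d x.succ.succ * d 0) +
      (∑ x : Fin n, d 0 * (fderiv ℝ (H (q 0)) fun k => q k.succ.succ) (Pi.single x 1) *
        d x.succ.succ) =
      ∑ x : Fin n, d 0 * (fderiv ℝ (H (q 0)) fun k => q k.succ.succ) (Pi.single x 1) *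
        d x.succ.succ * 2 := by
    rw [← Finset.sum_add_distrib]
    exact Finset.sum_congr rfl (fun x _ => by ring)
  linarith

section helpers

variable {E : Type*} [NormedAddCommGroup E] [NormedSpace ℝ E] [CompleteSpace E]

/-- If `f` has everywhere derivative `f₁`, `f₁` has everywhere derivative `f₂`, and `f₂` is
continuous, then `f` is `C²`. -/
lemma contDiff_two_of_derivs {f f₁ f₂ : ℝ → E}
    (h0 : ∀ t, HasDerivAt f (f₁ t) t) (h1 : ∀ t, HasDerivAt f₁ (f₂ t) t)
    (h2 : Continuous f₂) : ContDiff ℝ 2 f := by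
  have e1 : deriv f = f₁ := funext fun t => (h0 t).deriv
  have e2 : deriv f₁ = f₂ := funext fun t => (h1 t).deriv
  rw [show (2 : WithTop ℕ∞) = 1 + 1 by norm_num, contDiff_succ_iff_deriv]
  refine ⟨fun t => (h0 t).differentiableAt, by intro h; simp at h, ?_⟩
  rw [e1, contDiff_one_iff_deriv, e2]
  exact ⟨fun t => (h1 t).differentiableAt, h2⟩

/-- FTC: integral of a continuous function from `t₀`. -/
lemma hasDerivAt_integral_of_continuous {φ : ℝ → E} (hφ : Continuous φ) (t₀ t : ℝ) :
    HasDerivAt (fun s => ∫ τ in t₀..s, φ τ) (φ t) t :=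
  intervalIntegral.integral_hasDerivAt_right (hφ.intervalIntegrable _ _)
    (hφ.stronglyMeasurableAtFilter _ _) hφ.continuousAt

end helpers

/-- If all second partial derivatives of `H` with respect to the
`x`-variables are uniformly bounded, then the standard pp-wave `(ℝ^{n+2}, g^H)` is
geodesically complete. -/
theorem stmt_10 (n : ℕ) (H : ℝ → (Fin n → ℝ) → ℝ)
    (hH : ContDiff ℝ (⊤ : ℕ∞) (fun q : ℝ × (Fin n → ℝ) => H q.1 q.2))
    (hbound : ∃ c : ℝ, 0 < c ∧ ∀ (u : ℝ) (x : Fin n → ℝ) (i j : Fin n),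
      |fderiv ℝ (fun y => fderiv ℝ (H u) y (Pi.single j 1)) x (Pi.single i 1)| ≤ c) :
    ∀ (t₀ : ℝ) (p v : Fin (n + 2) → ℝ),
      ∃ γ : ℝ → Fin (n + 2) → ℝ,
        IsGeodesicOn (ppMetric H) γ Set.univ ∧ γ t₀ = p ∧ deriv γ t₀ = v := by
  obtain ⟨c, hc, hb⟩ := hbound
  intro t₀ p v
  set a : ℝ := v 0 with ha
  set uu : ℝ → ℝ := fun t => p 0 + a * (t - t₀) with huu
  have hu : ∀ t, HasDerivAt uu a t := by
    intro t
    have h1 : HasDerivAt (fun s : ℝ => s - t₀) 1 t := (hasDerivAt_id t).sub_const t₀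
    have h2 := (h1.const_mul a).const_add (p 0)
    simpa [huu] using h2
  have hucont : Continuous uu :=
    continuous_iff_continuousAt.mpr fun t => (hu t).continuousAt
  set G : ℝ → (Fin n → ℝ) → (Fin n → ℝ) :=
    fun u x => fun j => fderiv ℝ (H u) x (Pi.single j 1) with hG
  have hGcont : Continuous (fun q : ℝ × (Fin n → ℝ) => G q.1 q.2) := gx_cont hH
  have hGlip : ∀ u, LipschitzWith ((n * c).toNNReal) (G u) := gx_lip hH hc.le hb
  set L : ℝ≥0 := (n * c).toNNReal with hL
  set K : ℝ≥0 := 1 ⊔ ((a^2).toNNReal * L) with hK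
  set F : ℝ → ((Fin n → ℝ) × (Fin n → ℝ)) → ((Fin n → ℝ) × (Fin n → ℝ)) :=
    fun t y => (y.2, (a^2) • G (uu t) y.1) with hF
  have hFlip : ∀ t, LipschitzWith K (F t) := by
    intro t
    refine LipschitzWith.of_dist_le_mul (fun y y' => ?_)
    have hd1 : dist (F t y) (F t y') =
        max (dist y.2 y'.2) (dist ((a^2) • G (uu t) y.1) ((a^2) • G (uu t) y'.1)) := rfl
    rw [hd1]
    have hK1' : (1:ℝ≥0) ≤ K := le_sup_left
    have hK1 : (1:ℝ) ≤ (K:ℝ) := by exact_mod_cast hK1'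
    have hfst : dist y.1 y'.1 ≤ dist y y' := le_max_left _ _
    have hsnd : dist y.2 y'.2 ≤ dist y y' := le_max_right _ _
    refine max_le ?_ ?_
    · calc dist y.2 y'.2 ≤ dist y y' := hsnd
        _ ≤ K * dist y y' := le_mul_of_one_le_left dist_nonneg hK1
    · have h3 : dist (G (uu t) y.1) (G (uu t) y'.1) ≤ L * dist y.1 y'.1 :=
        (hGlip (uu t)).dist_le_mul _ _
      have h4 : ((a^2).toNNReal * L : ℝ≥0) ≤ K := le_sup_right.trans (le_refl K)
      calc dist ((a^2) • G (uu t) y.1) ((a^2) • G (uu t) y'.1)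
          = ‖(a^2)‖ * dist (G (uu t) y.1) (G (uu t) y'.1) := dist_smul₀ _ _ _
        _ ≤ (a^2) * (L * dist y.1 y'.1) := by
            rw [Real.norm_eq_abs, abs_of_nonneg (sq_nonneg a)]
            exact mul_le_mul_of_nonneg_left h3 (sq_nonneg a)
        _ ≤ ((a^2).toNNReal : ℝ) * L * dist y y' := by
            rw [Real.coe_toNNReal _ (sq_nonneg a), mul_assoc]
            exact mul_le_mul_of_nonneg_left
              (mul_le_mul_of_nonneg_left hfst L.2) (sq_nonneg a)
        _ ≤ K * dist y y' := mul_le_mul_of_nonneg_right (by exact_mod_cast h4) dist_nonneg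
  have hFcont : Continuous (fun q : ℝ × ((Fin n → ℝ) × (Fin n → ℝ)) => F q.1 q.2) := by
    refine Continuous.prodMk (continuous_snd.comp continuous_snd) ?_
    exact ((hGcont.comp ((hucont.comp continuous_fst).prodMk
      (continuous_fst.comp continuous_snd)))).fun_const_smul _
  obtain ⟨sol, sol0, solD⟩ := global_exist hFlip hFcont t₀
    (fun k => p k.succ.succ, fun k => v k.succ.succ)
  set x : ℝ → Fin n → ℝ := fun t => (sol t).1 with hx'
  set w : ℝ → Fin n → ℝ := fun t => (sol t).2 with hw'
  have hx : ∀ t, HasDerivAt x (w t) t := fun t =>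
    (ContinuousLinearMap.fst ℝ (Fin n → ℝ) (Fin n → ℝ)).hasFDerivAt.comp_hasDerivAt t (solD t)
  have hw : ∀ t, HasDerivAt w ((a^2) • G (uu t) (x t)) t := fun t =>
    (ContinuousLinearMap.snd ℝ (Fin n → ℝ) (Fin n → ℝ)).hasFDerivAt.comp_hasDerivAt t (solD t)
  have hxcont : Continuous x := continuous_iff_continuousAt.mpr fun t => (hx t).continuousAt
  have hwcont : Continuous w := continuous_iff_continuousAt.mpr fun t => (hw t).continuousAt
  set φ : ℝ → ℝ := fun t =>
    -(fderiv ℝ (fun q' : ℝ × (Fin n → ℝ) => H q'.1 q'.2) (uu t, x t) (1, 0) * (a * a))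
      - 2 * a * ∑ k : Fin n, fderiv ℝ (H (uu t)) (x t) (Pi.single k 1) * w t k with hφ'
  have hφcont : Continuous φ := by
    have h1 : Continuous (fun t => fderiv ℝ (fun q' : ℝ × (Fin n → ℝ) => H q'.1 q'.2)
        (uu t, x t) ((1:ℝ), (0 : Fin n → ℝ))) :=
      ((cont_fderiv_full hH).comp (hucont.prodMk hxcont)).clm_apply continuous_const
    have h2 : Continuous (fun t => ∑ k : Fin n,
        fderiv ℝ (H (uu t)) (x t) (Pi.single k 1) * w t k) := by
      refine continuous_finset_sum _ (fun k _ => Continuous.mul ?_ ?_)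
      · exact (continuous_apply k).comp (hGcont.comp (hucont.prodMk hxcont))
      · exact (continuous_apply k).comp hwcont
    exact ((h1.mul continuous_const).neg).sub (continuous_const.mul h2)
  set z : ℝ → ℝ := fun t => v 1 + ∫ τ in t₀..t, φ τ with hz'
  have hz : ∀ t, HasDerivAt z (φ t) t := fun t =>
    (hasDerivAt_integral_of_continuous hφcont t₀ t).const_add (v 1)
  have hzcont : Continuous z := continuous_iff_continuousAt.mpr fun t => (hz t).continuousAt
  set vv : ℝ → ℝ := fun t => p 1 + ∫ τ in t₀..t, z τ with hvv'
  have hvv : ∀ t, HasDerivAt vv (z t) t := fun t =>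
    (hasDerivAt_integral_of_continuous hzcont t₀ t).const_add (p 1)
  set γ : ℝ → Fin (n+2) → ℝ := fun t => Fin.cons (uu t) (Fin.cons (vv t) (x t)) with hγ'
  set γ1 : ℝ → Fin (n+2) → ℝ := fun t => Fin.cons a (Fin.cons (z t) (w t)) with hγ1'
  set γ2 : ℝ → Fin (n+2) → ℝ :=
    fun t => Fin.cons 0 (Fin.cons (φ t) ((a^2) • G (uu t) (x t))) with hγ2'
  have hdγ : ∀ t, HasDerivAt γ (γ1 t) t := by
    intro t
    rw [hasDerivAt_pi]
    intro i
    induction i using Fin.cases with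
    | zero => simpa [hγ', hγ1'] using hu t
    | succ i =>
      induction i using Fin.cases with
      | zero => simpa [hγ', hγ1'] using hvv t
      | succ m => simpa [hγ', hγ1'] using hasDerivAt_pi.1 (hx t) m
  have hdγ1 : ∀ t, HasDerivAt γ1 (γ2 t) t := by
    intro t
    rw [hasDerivAt_pi]
    intro i
    induction i using Fin.cases with
    | zero => simpa [hγ1', hγ2'] using hasDerivAt_const t a
    | succ i =>
      induction i using Fin.cases with
      | zero => simpa [hγ1', hγ2'] using hz t
      | succ m => simpa [hγ1', hγ2'] using hasDerivAt_pi.1 (hw t) m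
  have hderiv : deriv γ = γ1 := funext fun t => (hdγ t).deriv
  have hderiv2 : ∀ t, deriv (deriv γ) t = γ2 t := fun t => by
    rw [hderiv]; exact (hdγ1 t).deriv
  have hγsmooth : ContDiff ℝ 2 γ := by
    apply contDiff_pi.mpr
    intro i
    induction i using Fin.cases with
    | zero =>
      have e : (fun t => γ t 0) = uu := by funext t; simp [hγ']
      rw [e]
      exact contDiff_two_of_derivs hu (fun t => hasDerivAt_const t a) continuous_const
    | succ i =>
      induction i using Fin.cases with
      | zero =>
        have e : (fun t => γ t (Fin.succ 0)) = vv := by funext t; simp [hγ']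
        rw [e]
        exact contDiff_two_of_derivs hvv hz hφcont
      | succ m =>
        have e : (fun t => γ t m.succ.succ) = fun t => x t m := by funext t; simp [hγ']
        rw [e]
        refine contDiff_two_of_derivs (f₁ := fun t => w t m)
          (f₂ := fun t => ((a^2) • G (uu t) (x t)) m)
          (fun t => hasDerivAt_pi.1 (hx t) m) (fun t => hasDerivAt_pi.1 (hw t) m) ?_
        exact (continuous_apply m).comp ((hGcont.comp (hucont.prodMk hxcont)).fun_const_smul _)
  refine ⟨γ, ⟨hγsmooth.contDiffOn, ?_⟩, ?_, ?_⟩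
  · intro t _ k
    rw [hderiv2 t, hderiv]
    have hq0 : γ t 0 = uu t := by simp [hγ']
    have htl : (fun m => γ t m.succ.succ) = x t := by funext m; simp [hγ']
    induction k using Fin.cases with
    | zero =>
      rw [geod_sum_zero hH (γ t) (γ1 t)]
      simp [hγ2']
    | succ k =>
      induction k using Fin.cases with
      | zero =>
        rw [show (Fin.succ 0 : Fin (n+2)) = 1 from Fin.succ_zero_eq_one]
        rw [geod_sum_one hH (γ t) (γ1 t), hq0, htl]
        have e1 : γ1 t 0 = a := by simp [hγ1']
        have e2 : ∀ k : Fin n, γ1 t k.succ.succ = w t k := fun k => by simp [hγ1']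
        have e3 : γ2 t 1 = φ t := by
          rw [hγ2', show (1 : Fin (n+2)) = Fin.succ 0 from Fin.succ_zero_eq_one.symm]
          simp
        rw [e3, e1, hφ']
        simp only [e2]
      | succ m =>
        rw [geod_sum_succ hH (γ t) (γ1 t) m, hq0, htl]
        have e1 : γ1 t 0 = a := by simp [hγ1']
        have e4 : γ2 t m.succ.succ = a^2 * G (uu t) (x t) m := by simp [hγ2']
        rw [e4, e1, hG]
        ring
  · funext i
    induction i using Fin.cases with
    | zero => simp [hγ', huu]
    | succ i =>
      induction i using Fin.cases with
      | zero => simp [hγ', hvv', intervalIntegral.integral_same]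
      | succ m =>
        have e : x t₀ = fun k => p k.succ.succ := congrArg Prod.fst sol0
        simp [hγ', e]
  · rw [hderiv]
    funext i
    induction i using Fin.cases with
    | zero => simpa [hγ1'] using ha.symm
    | succ i =>
      induction i using Fin.cases with
      | zero => simp [hγ1', hz', intervalIntegral.integral_same]
      | succ m =>
        have e : w t₀ = fun k => v k.succ.succ := congrArg Prod.snd sol0
        simp [hγ1', e]
end geodSum
end
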